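/- arXiv:1303.0528 — 2 statements merged into one kernel-verified Lean document; each statement's English description precedes it below -/
import Mathlib

section
/- Let q ≥ 4 be even, θ = π/q, and U = [[2cos θ, -1], [1, 0]], S = [[0, 1], [-1, 0]]. Then sin(θ) · U^{q/2}·S = [[1, cos θ], [cos θ, 1]]. In particular the matrix g := U^{q/2}·S satisfies g.1 = 1 and g.(-1) = -1 under the Möbius action, has determinant 1, and has trace 2/sin θ > 2 (hence is hyperbolic). -/
open Real Matrix

/-!
`U` is conjugate to the rotation by `θ`, so its powers obey the Chebyshev recursion
`U^(k+1) = 2 cos θ • U^k - U^(k-1)` and `sin θ • U^k` has entries `± sin (jθ)`, `j = k - 1, k, k + 1`.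
At `k = q / 2`, where `kθ = π / 2`, these are `cos θ`, `1`, `cos θ`, so `sin θ • U^(q/2) S` is the
symmetric matrix `[[1, cos θ], [cos θ, 1]]`. A matrix `[[a, b], [b, a]]` fixes `±1` under the Möbius
action, and here `a² - b² = (1 - cos² θ) / sin² θ = 1`.
-/

lemma sin_smul_pow_chebyshev (θ : ℝ) (k : ℕ) :
    sin θ • !![2 * cos θ, -1; 1, 0] ^ k =
      !![sin ((k + 1) * θ), -sin (k * θ); sin (k * θ), -sin ((k - 1) * θ)] := by
  induction k with
  | zero => ext i j; fin_cases i <;> fin_cases j <;> simp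
  | succ k ih =>
    have recur (x : ℝ) : sin ((x + 1) * θ) = 2 * sin (x * θ) * cos θ - sin ((x - 1) * θ) := by
      rw [add_mul, sub_mul, one_mul, sin_add, sin_sub]; ring
    rw [pow_succ, ← smul_mul_assoc, ih, mul_fin_two, Nat.cast_succ, add_sub_cancel_right,
      recur (k + 1), add_sub_cancel_right, recur k]
    ext i j; fin_cases i <;> fin_cases j <;> simp <;> ring

lemma sin_smul_pow_mul_S_of_mul_eq_pi_div_two {θ : ℝ} {n : ℕ} (hn : n * θ = π / 2) :
    sin θ • (!![2 * cos θ, -1; 1, 0] ^ n * !![0, 1; -1, 0]) = !![1, cos θ; cos θ, 1] := by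
  have h_succ : sin ((n + 1) * θ) = cos θ := by
    rw [add_mul, one_mul, hn, add_comm, sin_add_pi_div_two]
  have h_pred : sin ((n - 1) * θ) = cos θ := by
    rw [sub_mul, one_mul, hn, sin_pi_div_two_sub]
  rw [← smul_mul_assoc, sin_smul_pow_chebyshev, h_succ, h_pred, hn, sin_pi_div_two, mul_fin_two]
  simp

noncomputable def moebius (g : Matrix (Fin 2) (Fin 2) ℝ) (z : ℝ) : ℝ :=
  (g 0 0 * z + g 0 1) / (g 1 0 * z + g 1 1)

lemma moebius_bisymm_one {a b : ℝ} (h : a + b ≠ 0) : moebius !![a, b; b, a] 1 = 1 := by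
  simp only [moebius, of_apply, cons_val', cons_val_zero, cons_val_one, empty_val',
    cons_val_fin_one, mul_one]
  rw [add_comm b a, div_self h]

lemma moebius_bisymm_neg_one {a b : ℝ} (h : a ≠ b) : moebius !![a, b; b, a] (-1) = -1 := by
  simp only [moebius, of_apply, cons_val', cons_val_zero, cons_val_one, empty_val',
    cons_val_fin_one, mul_neg_one]
  rw [div_eq_iff (by rwa [neg_add_eq_sub, sub_ne_zero])]
  ring

theorem stmt_7 (q : ℕ) (hq : 4 ≤ q) (heven : Even q) (θ : ℝ) (hθ : θ = Real.pi / q)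
    (U S : Matrix (Fin 2) (Fin 2) ℝ)
    (hU : U = !![2 * Real.cos θ, -1; 1, 0])
    (hS : S = !![0, 1; -1, 0])
    (g : Matrix (Fin 2) (Fin 2) ℝ) (hg : g = U ^ (q / 2) * S) :
    Real.sin θ • g = !![1, Real.cos θ; Real.cos θ, 1] ∧
    (g 0 0 * 1 + g 0 1) / (g 1 0 * 1 + g 1 1) = 1 ∧
    (g 0 0 * (-1) + g 0 1) / (g 1 0 * (-1) + g 1 1) = -1 ∧
    g.det = 1 ∧
    g.trace = 2 / Real.sin θ ∧
    2 / Real.sin θ > 2 := by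
  obtain ⟨n, rfl⟩ := heven
  have hq2 : (n + n) / 2 = n := by omega
  have hn : (2 : ℝ) ≤ n := by exact_mod_cast (by omega : 2 ≤ n)
  have hnθ : n * θ = π / 2 := by rw [hθ]; push_cast; field_simp; ring
  have hθ_pos : 0 < θ := by rw [hθ]; positivity
  have hθ_lt : θ < π / 2 := by nlinarith
  have hsin : 0 < sin θ := sin_pos_of_pos_of_lt_pi hθ_pos (by linarith [pi_pos])
  have hsin_lt : sin θ < 1 := by
    simpa using sin_lt_sin_of_lt_of_le_pi_div_two (by linarith) le_rfl hθ_lt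
  have hcos : 0 < cos θ := cos_pos_of_mem_Ioo ⟨by linarith, hθ_lt⟩
  have hcos_lt : cos θ < 1 := by
    simpa using cos_lt_cos_of_nonneg_of_le_pi le_rfl (by linarith) hθ_pos
  have hsmul : sin θ • g = !![1, cos θ; cos θ, 1] := by
    rw [hg, hU, hS, hq2]; exact sin_smul_pow_mul_S_of_mul_eq_pi_div_two hnθ
  have hg_eq : g = !![(sin θ)⁻¹, (sin θ)⁻¹ * cos θ; (sin θ)⁻¹ * cos θ, (sin θ)⁻¹] := by
    rw [(eq_inv_smul_iff₀ hsin.ne').mpr hsmul]; simp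
  subst hg_eq
  refine ⟨hsmul, moebius_bisymm_one ?_, moebius_bisymm_neg_one ?_, ?_, ?_, ?_⟩
  · positivity
  · exact fun h => hcos_lt.ne (by simpa [hsin.ne'] using h.symm)
  · rw [det_fin_two_of]; field_simp; linarith [sin_sq_add_cos_sq θ]
  · rw [trace_fin_two_of]; ring
  · rw [gt_iff_lt, lt_div_iff₀ hsin]; linarith
end

section
/- Let q ≥ 4 be even, λ = 2·cos(π/q), U = [[λ, -1], [1, 0]], S = [[0, 1], [-1, 0]], Q = [[0, 1], [1, 0]], and g := U^{q/2}·S. Then Q·g·Q = g as matrices; consequently (Q·g)² = g². -/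
open Real Matrix

private lemma sin_rec (θ : ℝ) (x : ℝ) :
    Real.sin ((x+1)*θ) = 2 * Real.cos θ * Real.sin (x*θ) - Real.sin ((x-1)*θ) := by
  have h1 : (x+1)*θ = x*θ + θ := by ring
  have h2 : (x-1)*θ = x*θ - θ := by ring
  rw [h1, h2, Real.sin_add, Real.sin_sub]; ring

private lemma smul_pow_U (lam θ : ℝ) (hlam : lam = 2 * Real.cos θ) (n : ℕ) :
    Real.sin θ • (!![lam, -1; 1, 0] : Matrix (Fin 2) (Fin 2) ℝ) ^ n =
      !![Real.sin (((n:ℝ)+1)*θ), -Real.sin ((n:ℝ)*θ);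
         Real.sin ((n:ℝ)*θ), -Real.sin (((n:ℝ)-1)*θ)] := by
  induction n with
  | zero =>
    ext i j
    fin_cases i <;> fin_cases j <;> simp [Real.sin_neg]
  | succ n ih =>
    have key : Real.sin θ • (!![lam, -1; 1, 0] : Matrix (Fin 2) (Fin 2) ℝ) ^ (n+1)
        = (Real.sin θ • (!![lam, -1; 1, 0] : Matrix (Fin 2) (Fin 2) ℝ) ^ n) * !![lam, -1; 1, 0] := by
      rw [pow_succ, smul_mul_assoc]
    have hc : ((n+1:ℕ):ℝ) = (n:ℝ)+1 := by push_cast; ring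
    have r1 : Real.sin (((n:ℝ)+1+1)*θ)
        = 2*Real.cos θ*Real.sin (((n:ℝ)+1)*θ) - Real.sin ((n:ℝ)*θ) := by
      have h := sin_rec θ ((n:ℝ)+1)
      rw [show ((n:ℝ)+1-1) = (n:ℝ) by ring] at h
      exact h
    have r2 : Real.sin (((n:ℝ)+1)*θ)
        = 2*Real.cos θ*Real.sin ((n:ℝ)*θ) - Real.sin (((n:ℝ)-1)*θ) := sin_rec θ n
    rw [key, ih]
    ext i j
    fin_cases i <;> fin_cases j <;>
      simp [Matrix.mul_apply, Fin.sum_univ_two, hlam, hc]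
    · rw [show ((n:ℝ)+1+1)*θ = (((n:ℝ)+1)+1)*θ by ring, r1]; ring
    · rw [r2]; ring

theorem stmt_8 (q : ℕ) (hq : 4 ≤ q) (heven : Even q) (lam : ℝ)
    (hlam : lam = 2 * Real.cos (Real.pi / q))
    (U S Q : Matrix (Fin 2) (Fin 2) ℝ)
    (hU : U = !![lam, -1; 1, 0])
    (hS : S = !![0, 1; -1, 0])
    (hQ : Q = !![0, 1; 1, 0])
    (g : Matrix (Fin 2) (Fin 2) ℝ) (hg : g = U ^ (q / 2) * S) :
    Q * g * Q = g ∧ (Q * g) ^ 2 = g ^ 2 := by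
  have hq0 : (0:ℝ) < q := by positivity
  set θ : ℝ := Real.pi / q with hθ
  have hθpos : 0 < θ := by positivity
  have hθlt : θ < Real.pi := by
    rw [hθ, div_lt_iff₀ hq0]
    have h1q : (1:ℝ) < q := by exact_mod_cast by omega
    nlinarith [Real.pi_pos, mul_pos Real.pi_pos (sub_pos.mpr h1q)]
  have hs : Real.sin θ ≠ 0 := ne_of_gt (Real.sin_pos_of_pos_of_lt_pi hθpos hθlt)
  have hM := smul_pow_U lam θ hlam (q / 2)
  have hmθ : ((q/2 : ℕ):ℝ) * θ = Real.pi / 2 := by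
    obtain ⟨k, hk⟩ := heven
    have hk' : q / 2 = k := by omega
    have hqk : (q:ℝ) = 2 * k := by exact_mod_cast by omega
    have hk0 : (0:ℝ) < k := by
      have : 1 ≤ k := by omega
      exact_mod_cast this
    rw [hk', hθ, hqk]
    field_simp
  have hp : Real.sin ((((q/2 : ℕ):ℝ)+1) * θ) = Real.cos θ := by
    rw [add_mul, hmθ, one_mul, Real.sin_add]
    simp
  have hm : Real.sin ((((q/2 : ℕ):ℝ)-1) * θ) = Real.cos θ := by
    rw [sub_mul, hmθ, one_mul, Real.sin_sub]
    simp
  have h1 : Real.sin (((q/2 : ℕ):ℝ) * θ) = 1 := by rw [hmθ]; simp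
  have hsg : Real.sin θ • g = !![1, Real.cos θ; Real.cos θ, 1] := by
    rw [hg, hU, ← smul_mul_assoc, hM, hp, hm, h1, hS]
    ext i j
    fin_cases i <;> fin_cases j <;>
      simp [Matrix.mul_apply, Fin.sum_univ_two]
  have hmain : Q * g * Q = g := by
    apply smul_right_injective (Matrix (Fin 2) (Fin 2) ℝ) hs
    show Real.sin θ • (Q * g * Q) = Real.sin θ • g
    calc Real.sin θ • (Q * g * Q) = Q * (Real.sin θ • g) * Q := by
          rw [Matrix.mul_smul, Matrix.smul_mul]
      _ = Real.sin θ • g := by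
          rw [hsg, hQ]
          ext i j
          fin_cases i <;> fin_cases j <;>
            simp [Matrix.mul_apply, Fin.sum_univ_two]
  refine ⟨hmain, ?_⟩
  have hQQ : Q * Q = 1 := by
    rw [hQ]
    ext i j
    fin_cases i <;> fin_cases j <;> simp [Matrix.mul_apply, Fin.sum_univ_two, Matrix.one_apply]
  calc (Q * g) ^ 2 = Q * g * Q * g := by rw [sq, ← Matrix.mul_assoc]
    _ = g * g := by rw [hmain]
    _ = g ^ 2 := (sq g).symm
end
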